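/- Security of the k-th match masking: Let I ∈ {0,1}^n with at least k ones, and let i_k be the index of the k-th one. For each i ≠ i_k, the quantity A[i] = k·I[i] - 1 - Σ_{i'<i} I[i'] is a nonzero element of ℤ_p (for prime p > n + k), and hence r·A[i] for r uniform on ℤ_p \ {0} (or on ℤ_p) is uniformly distributed on ℤ_p \ {0} (respectively on ℤ_p). -/
import Mathlib

lemma uniform_map_mul_right (p : ℕ) [Fact p.Prime] (a : ZMod p) (ha : a ≠ 0) :
    (PMF.uniformOfFintype (ZMod p)).map (fun r => r * a)
      = PMF.uniformOfFintype (ZMod p) := by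
  ext b
  rw [PMF.map_apply]
  rw [tsum_eq_single (b * a⁻¹) ?_]
  · simp [PMF.uniformOfFintype_apply, mul_assoc, inv_mul_cancel₀ ha]
  · intro c hc
    rw [if_neg]
    intro h
    apply hc
    rw [h, mul_assoc, mul_inv_cancel₀ ha, mul_one]

/-- security of the k-th match masking.  Over ZMod p with p prime
and p > n + k, for every index i ≠ i_k the quantity A[i] is nonzero, and hence
multiplying the uniform distribution by it leaves it uniform (on ZMod p). -/
theorem kth_match_masking_secure (n k p : ℕ) (hp : p.Prime) [Fact p.Prime]
    (hpn : n + k < p) (hk : 1 ≤ k)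
    (I : Fin n → ℤ) (hI : ∀ i, I i = 0 ∨ I i = 1)
    (ik : Fin n) (hik1 : I ik = 1)
    (hik2 : ∑ i' ∈ Finset.univ.filter (fun i' => i' < ik), I i' = (k : ℤ) - 1) :
    ∀ i, i ≠ ik →
      (((k : ℤ) * I i - 1 - ∑ i' ∈ Finset.univ.filter (fun i' => i' < i), I i' : ℤ) : ZMod p) ≠ 0 ∧
      (PMF.uniformOfFintype (ZMod p)).map
          (fun r => r *
            (((k : ℤ) * I i - 1 - ∑ i' ∈ Finset.univ.filter (fun i' => i' < i), I i' : ℤ) : ZMod p))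
        = PMF.uniformOfFintype (ZMod p) := by
  intro i hi
  set S : Fin n → ℤ := fun j => ∑ i' ∈ Finset.univ.filter (fun i' => i' < j), I i' with hS
  -- basic bounds on partial sums
  have hSnonneg : ∀ j, 0 ≤ S j := by
    intro j
    apply Finset.sum_nonneg
    intro x _
    rcases hI x with h | h <;> omega
  have hSle : ∀ j, S j ≤ n := by
    intro j
    calc S j ≤ ∑ i' ∈ Finset.univ.filter (fun i' => i' < j), 1 := by
          apply Finset.sum_le_sum; intro x _; rcases hI x with h | h <;> omega
      _ ≤ ∑ _i' ∈ (Finset.univ : Finset (Fin n)), (1 : ℤ) := by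
          apply Finset.sum_le_sum_of_subset_of_nonneg (Finset.filter_subset _ _)
          intros; norm_num
      _ = n := by simp
  -- monotonicity: if a < b and I a = 1 then S a + 1 ≤ S b
  have hmono : ∀ a b : Fin n, a < b → I a = 1 → S a + 1 ≤ S b := by
    intro a b hab ha1
    have hsub : insert a (Finset.univ.filter (fun i' => i' < a)) ⊆
        Finset.univ.filter (fun i' => i' < b) := by
      intro x hx
      simp only [Finset.mem_insert, Finset.mem_filter, Finset.mem_univ, true_and] at hx ⊢
      rcases hx with rfl | hx
      · exact hab
      · exact lt_trans hx hab
    have hnotmem : a ∉ Finset.univ.filter (fun i' => i' < a) := by simp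
    have := Finset.sum_le_sum_of_subset_of_nonneg (f := I) hsub (by
      intro x _ _; rcases hI x with h | h <;> simp [h])
    rw [Finset.sum_insert hnotmem, ha1] at this
    linarith [this]
  -- the integer A i is nonzero
  have hAne : (k : ℤ) * I i - 1 - S i ≠ 0 := by
    rcases hI i with h0 | h1
    · have := hSnonneg i; rw [h0, mul_zero]; intro hA; linarith
    · intro hA
      have hSi : S i = (k : ℤ) - 1 := by rw [h1] at hA; linarith
      have hik2' : S ik = (k : ℤ) - 1 := hik2
      rcases lt_or_gt_of_ne hi with hlt | hgt
      · have := hmono i ik hlt h1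
        rw [hSi, hik2'] at this; linarith
      · have := hmono ik i hgt hik1
        rw [hSi, hik2'] at this; linarith
  -- bound: |A i| ≤ n + k
  have hAbound : |(k : ℤ) * I i - 1 - S i| ≤ (n : ℤ) + k := by
    have h1 := hSnonneg i
    have h2 := hSle i
    rcases hI i with h | h <;> rw [abs_le] <;> constructor <;> simp [h] <;> omega
  -- cast is nonzero
  have hcast : (((k : ℤ) * I i - 1 - S i : ℤ) : ZMod p) ≠ 0 := by
    intro h
    rw [ZMod.intCast_zmod_eq_zero_iff_dvd] at h
    have hle : (p : ℤ) ≤ |(k : ℤ) * I i - 1 - S i| :=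
      Int.le_of_dvd (abs_pos.mpr hAne) ((dvd_abs _ _).mpr h)
    have : ((n : ℤ) + k) < p := by exact_mod_cast hpn
    linarith
  exact ⟨hcast, uniform_map_mul_right p _ hcast⟩
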